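/- arXiv:1711.06641 — 3 statements merged into one kernel-verified Lean document; each statement's English description precedes it below -/
import Mathlib

section
/- Let α and β be nonnegative integers, not both zero, and define the (α,β)-NAV score of a committee S ⊆ C to be Σ_{i=1}^{n} (α·|S ∩ v_i| − β·|S ∩ v̄_i|). Then the (α,β)-NAV score of S equals Σ_{c ∈ S} ((α+β)·s(c) − β·n), and S maximizes the (α,β)-NAV score over all subsets of C if and only if {c ∈ C : (α+β)·s(c) > β·n} ⊆ S ⊆ {c ∈ C : (α+β)·s(c) ≥ β·n}; in particular, for each candidate c the decision whether c may or must belong to a winning committee depends only on the approvals for c. -/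
/-!
Each voter contributes `α` for every approved member of `S` and `-β` for every disapproved one,
so exchanging the two sums makes the score additive over `S`, with candidate `c` weighing
`α·s(c) - β·(n - s(c)) = (α+β)·s(c) - β·n`. A subset maximizes a sum of fixed weights exactly
when it contains every candidate of positive weight and no candidate of negative weight.
-/

open Finset

section MaximalSum

variable {ι M : Type*} [Fintype ι] (w : ι → M)

theorem sum_le_sum_filter_pos [AddCommMonoid M] [LinearOrder M] [IsOrderedAddMonoid M]
    (T : Finset ι) : ∑ c ∈ T, w c ≤ ∑ c ∈ univ.filter (0 < w ·), w c :=
  calc ∑ c ∈ T, w c ≤ ∑ c ∈ T.filter (0 < w ·), w c := by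
        rw [← sum_filter_add_sum_filter_not T (0 < w ·)]
        exact add_le_of_nonpos_right <| sum_nonpos fun c hc => not_lt.mp (mem_filter.mp hc).2
    _ ≤ ∑ c ∈ univ.filter (0 < w ·), w c :=
        sum_le_sum_of_subset_of_nonneg (filter_subset_filter _ (subset_univ T))
          fun c hc _ => (mem_filter.mp hc).2.le

theorem sum_filter_pos_eq_sum [AddCommMonoid M] [LinearOrder M] {S : Finset ι}
    (hpos : univ.filter (0 < w ·) ⊆ S) (hnonneg : S ⊆ univ.filter (0 ≤ w ·)) :
    ∑ c ∈ univ.filter (0 < w ·), w c = ∑ c ∈ S, w c :=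
  sum_subset hpos fun c hcS hc =>
    le_antisymm (by simpa using hc) (mem_filter.mp (hnonneg hcS)).2

theorem forall_sum_le_sum_iff [DecidableEq ι] [AddCommGroup M] [LinearOrder M]
    [IsOrderedAddMonoid M] (S : Finset ι) :
    (∀ T : Finset ι, ∑ c ∈ T, w c ≤ ∑ c ∈ S, w c) ↔
      univ.filter (0 < w ·) ⊆ S ∧ S ⊆ univ.filter (0 ≤ w ·) := by
  refine ⟨fun hmax => ⟨fun c hc => ?_, fun c hcS => ?_⟩, fun ⟨hpos, hnonneg⟩ T => ?_⟩
  · by_contra hcS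
    have := hmax (insert c S)
    rw [sum_insert hcS, add_le_iff_nonpos_left] at this
    exact this.not_gt (mem_filter.mp hc).2
  · have := hmax (S.erase c)
    rw [← add_sum_erase S w hcS, le_add_iff_nonneg_left] at this
    exact mem_filter.mpr ⟨mem_univ c, this⟩
  · exact (sum_le_sum_filter_pos w T).trans (sum_filter_pos_eq_sum w hpos hnonneg).le

end MaximalSum

section Score

variable {C : Type*} [DecidableEq C]

theorem mul_card_inter_sub_mul_card_inter_compl [Fintype C] (a b : ℤ) (S V : Finset C) :
    a * #(S ∩ V) - b * #(S ∩ Vᶜ) = ∑ c ∈ S, if c ∈ V then a else -b := by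
  have hcompl : S.filter (· ∉ V) = S ∩ Vᶜ := by ext; simp
  rw [sum_ite, sum_const, sum_const, filter_mem_eq_inter, hcompl, nsmul_eq_mul, nsmul_eq_mul]
  ring

theorem sum_ite_mem_voters {n : ℕ} (v : Fin n → Finset C) (a b : ℤ) (c : C) :
    ∑ i : Fin n, (if c ∈ v i then a else -b) = (a + b) * #{i | c ∈ v i} - b * n := by
  have hcard : #{i | c ∈ v i} + #{i | c ∉ v i} = n := by
    simpa using card_filter_add_card_filter_not (s := (univ : Finset (Fin n))) (c ∈ v ·)
  rw [sum_ite, sum_const, sum_const, nsmul_eq_mul, nsmul_eq_mul,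
    show (n : ℤ) = #{i | c ∈ v i} + #{i | c ∉ v i} by exact_mod_cast hcard.symm]
  ring

theorem linear_nav_score_eq [Fintype C] {n : ℕ} (v : Fin n → Finset C) (a b : ℤ)
    (S : Finset C) :
    ∑ i : Fin n, (a * #(S ∩ v i) - b * #(S ∩ (v i)ᶜ)) =
      ∑ c ∈ S, ((a + b) * #{i | c ∈ v i} - b * n) := by
  simp_rw [mul_card_inter_sub_mul_card_inter_compl, ← sum_ite_mem_voters]
  exact sum_comm

end Score

theorem linear_nav_winning_general {C : Type*} [Fintype C] [DecidableEq C]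
    (n : ℕ) (v : Fin n → Finset C)
    (α β : ℕ) :
    (∀ S : Finset C,
        (∑ i : Fin n, ((α : ℤ) * ((S ∩ v i).card : ℤ) - (β : ℤ) * ((S ∩ (v i)ᶜ).card : ℤ)))
          = ∑ c ∈ S,
              (((α : ℤ) + (β : ℤ)) *
                  ((Finset.univ.filter (fun i : Fin n => c ∈ v i)).card : ℤ)
                - (β : ℤ) * (n : ℤ)))
    ∧ (∀ S : Finset C,
        (∀ T : Finset C,
          (∑ i : Fin n, ((α : ℤ) * ((T ∩ v i).card : ℤ) - (β : ℤ) * ((T ∩ (v i)ᶜ).card : ℤ)))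
            ≤ (∑ i : Fin n,
                ((α : ℤ) * ((S ∩ v i).card : ℤ) - (β : ℤ) * ((S ∩ (v i)ᶜ).card : ℤ))))
        ↔ (Finset.univ.filter
              (fun c : C =>
                β * n < (α + β) * (Finset.univ.filter (fun i : Fin n => c ∈ v i)).card) ⊆ S
            ∧ S ⊆ Finset.univ.filter
              (fun c : C =>
                β * n ≤ (α + β) * (Finset.univ.filter (fun i : Fin n => c ∈ v i)).card))) := by
  refine ⟨linear_nav_score_eq v α β, fun S => ?_⟩
  simp_rw [linear_nav_score_eq v α β]
  rw [forall_sum_le_sum_iff]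
  simp only [sub_pos, sub_nonneg]
  norm_cast

/-- For linear functions `f(x) = α·x`, `g(x) = β·x` with `α, β` not both zero, the
`(α,β)`-NAV score of `S` equals `∑_{c ∈ S} ((α+β)·s(c) − β·n)`, and `S` maximizes the score
iff `{c : (α+β)·s(c) > β·n} ⊆ S ⊆ {c : (α+β)·s(c) ≥ β·n}`. -/
theorem linear_nav_winning {C : Type*} [Fintype C] [DecidableEq C]
    (n : ℕ) (v : Fin n → Finset C)
    (α β : ℕ) (hαβ : ¬ (α = 0 ∧ β = 0)) :
    (∀ S : Finset C,
        (∑ i : Fin n, ((α : ℤ) * ((S ∩ v i).card : ℤ) - (β : ℤ) * ((S ∩ (v i)ᶜ).card : ℤ)))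
          = ∑ c ∈ S,
              (((α : ℤ) + (β : ℤ)) *
                  ((Finset.univ.filter (fun i : Fin n => c ∈ v i)).card : ℤ)
                - (β : ℤ) * (n : ℤ)))
    ∧ (∀ S : Finset C,
        (∀ T : Finset C,
          (∑ i : Fin n, ((α : ℤ) * ((T ∩ v i).card : ℤ) - (β : ℤ) * ((T ∩ (v i)ᶜ).card : ℤ)))
            ≤ (∑ i : Fin n,
                ((α : ℤ) * ((S ∩ v i).card : ℤ) - (β : ℤ) * ((S ∩ (v i)ᶜ).card : ℤ))))
        ↔ (Finset.univ.filter
              (fun c : C =>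
                β * n < (α + β) * (Finset.univ.filter (fun i : Fin n => c ∈ v i)).card) ⊆ S
            ∧ S ⊆ Finset.univ.filter
              (fun c : C =>
                β * n ≤ (α + β) * (Finset.univ.filter (fun i : Fin n => c ∈ v i)).card))) :=
  linear_nav_winning_general n v α β
end

section
/- Consider an X3C instance with n > 39 and its reduced election. Every committee C ⊆ {S_1, …, S_n} with fewer than six candidates has (f,g)-NAV score strictly less than 7n. -/
/-!
An element covered by `a` committee members and missed by `b` of them contributes
`2 (f a - g b) + (f b - g a)` to the score, which is at most `2 + 7 a`. Summing over the
elements and double counting gives a score of at most `2n + 7 · 3|C| ≤ 2n + 105`, which is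
below `7n` as soon as `n > 21`.
-/

open Finset

/-- `f(0) = 0` and `f(x) = 4` for `x ≥ 1`. -/
def fX : ℕ → ℤ := fun x => if x = 0 then 0 else 4

/-- `g(0) = 0`, `g(1) = 1` and `g(x) = 2` for `x ≥ 2`. -/
def gX : ℕ → ℤ := fun x => if x = 0 then 0 else if x = 1 then 1 else 2

/-- Ballot of voter `(i, t)` in the reduced election: for `t ≠ 2` (the two set voters of
element `i`) the candidates `j` with `i ∈ SS j`, and for `t = 2` (the antiset voter of
element `i`) the candidates `j` with `i ∉ SS j`. -/
def x3cBallot {n : ℕ} (SS : Fin n → Finset (Fin n)) (p : Fin n × Fin 3) : Finset (Fin n) :=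
  if p.2 = 2 then Finset.univ.filter (fun j => p.1 ∉ SS j)
  else Finset.univ.filter (fun j => p.1 ∈ SS j)

/-- The `(f,g)`-NAV score of a committee `T` in the reduced election. -/
def x3cScore {n : ℕ} (SS : Fin n → Finset (Fin n)) (T : Finset (Fin n)) : ℤ :=
  ∑ p : Fin n × Fin 3,
    (fX ((T ∩ x3cBallot SS p).card) - gX ((T ∩ (x3cBallot SS p)ᶜ).card))

lemma element_score_le (a b : ℕ) : 2 * (fX a - gX b) + (fX b - gX a) ≤ 2 + 7 * a := by
  unfold fX gX
  split_ifs <;> omega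

lemma sum_card_filter_mem_eq_sum_card {α β : Type*} [Fintype α] [DecidableEq α]
    (SS : β → Finset α) (T : Finset β) :
    ∑ i, #{j ∈ T | i ∈ SS j} = ∑ j ∈ T, #(SS j) := by
  simpa [bipartiteAbove, bipartiteBelow] using
    sum_card_bipartiteAbove_eq_sum_card_bipartiteBelow (s := univ) (t := T)
      (r := fun i j => i ∈ SS j)

lemma x3cScore_eq_sum {n : ℕ} (SS : Fin n → Finset (Fin n)) (T : Finset (Fin n)) :
    x3cScore SS T = ∑ i, (2 * (fX #{j ∈ T | i ∈ SS j} - gX #{j ∈ T | i ∉ SS j}) +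
      (fX #{j ∈ T | i ∉ SS j} - gX #{j ∈ T | i ∈ SS j})) := by
  rw [x3cScore, Fintype.sum_prod_type]
  refine sum_congr rfl fun i _ => ?_
  simp only [x3cBallot, Fin.sum_univ_three, Fin.reduceEq, ↓reduceIte, inter_filter, inter_univ,
    compl_filter, Decidable.not_not]
  ring

lemma x3cScore_le {n : ℕ} (SS : Fin n → Finset (Fin n)) (T : Finset (Fin n)) :
    x3cScore SS T ≤ 2 * n + 7 * ∑ j ∈ T, #(SS j) := by
  calc x3cScore SS T ≤ ∑ i : Fin n, (2 + 7 * (#{j ∈ T | i ∈ SS j} : ℤ)) :=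
        (x3cScore_eq_sum SS T).trans_le <| sum_le_sum fun i _ => element_score_le _ _
    _ = 2 * n + 7 * ∑ j ∈ T, #(SS j) := by
        rw [sum_add_distrib, ← mul_sum, ← Nat.cast_sum, sum_card_filter_mem_eq_sum_card]
        simp [mul_comm]

theorem x3c_small_committee_score_lt_general (n : ℕ) (hn : 39 < n)
    (SS : Fin n → Finset (Fin n))
    (hsize : ∀ j : Fin n, (SS j).card = 3) :
    ∀ T : Finset (Fin n), T.card < 6 → x3cScore SS T < (7 * n : ℤ) := by
  intro T hT
  calc x3cScore SS T ≤ 2 * n + 7 * ∑ j ∈ T, #(SS j) := x3cScore_le SS T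
    _ = 2 * n + 7 * (#T * 3 : ℕ) := by rw [sum_const_nat fun j _ => hsize j]
    _ < 7 * n := by omega

/-- For an X3C instance with `n > 39`, every committee with fewer than six candidates has
`(f,g)`-NAV score strictly less than `7n`. -/
theorem x3c_small_committee_score_lt (n : ℕ) (hn : 39 < n)
    (SS : Fin n → Finset (Fin n))
    (hsize : ∀ j : Fin n, (SS j).card = 3)
    (hocc : ∀ i : Fin n, (Finset.univ.filter (fun j : Fin n => i ∈ SS j)).card = 3) :
    ∀ T : Finset (Fin n), T.card < 6 → x3cScore SS T < (7 * n : ℤ) :=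
  x3c_small_committee_score_lt_general n hn SS hsize
end

section
/- Consider an X3C instance and its reduced election, and let C ⊆ {S_1, …, S_n} be a committee with at least six candidates. If the element b_i belongs to more than one member of C, then the total contribution of the three voters v_i^1, v_i^2, v_i^3 to the (f,g)-NAV score of C, namely Σ_{v ∈ {v_i^1, v_i^2, v_i^3}} (f(|C ∩ v|) − g(|C ∩ v̄|)), equals exactly 6. -/
open Finset

/-- The total contribution of the three voters of element `i` to the `(f,g)`-NAV score of a
committee `T`. -/
def x3cContrib {n : ℕ} (SS : Fin n → Finset (Fin n)) (T : Finset (Fin n)) (i : Fin n) : ℤ :=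
  ∑ t : Fin 3,
    (fX ((T ∩ x3cBallot SS (i, t)).card) - gX ((T ∩ (x3cBallot SS (i, t))ᶜ).card))

/- The two set voters of `b_i` approve exactly the members of `C` containing `b_i` and the antiset
voter approves exactly the others, so if `a` members of `C` contain `b_i` and `b` do not, the
contribution is `2 (f a - g b) + (f b - g a)`. Since `b_i` lies in three sets, `2 ≤ a ≤ 3`, and
then `6 ≤ |C|` gives `b ≥ 3`; both `f` and `g` are constant (`4` and `2`) from `2` on. -/

theorem fX_of_ne_zero {m : ℕ} (hm : m ≠ 0) : fX m = 4 := if_neg hm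

theorem gX_of_two_le {m : ℕ} (hm : 2 ≤ m) : gX m = 2 := by
  simp only [gX]; split_ifs <;> omega

section FilterUniv

variable {α : Type*} [Fintype α] [DecidableEq α] (T : Finset α) (p : α → Prop) [DecidablePred p]

theorem inter_univ_filter : T ∩ univ.filter p = T.filter p := by
  rw [inter_filter, inter_univ]

theorem inter_compl_univ_filter : T ∩ (univ.filter p)ᶜ = T.filter (fun x => ¬p x) := by
  rw [compl_filter, inter_univ_filter]

end FilterUniv

theorem x3cContrib_eq {n : ℕ} (SS : Fin n → Finset (Fin n)) (T : Finset (Fin n)) (i : Fin n) :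
    x3cContrib SS T i =
      2 * (fX (T.filter (i ∈ SS ·)).card - gX (T.filter (i ∉ SS ·)).card) +
        (fX (T.filter (i ∉ SS ·)).card - gX (T.filter (i ∈ SS ·)).card) := by
  simp only [x3cContrib, Fin.sum_univ_three, x3cBallot, Fin.reduceEq, if_false, if_true,
    inter_univ_filter, inter_compl_univ_filter, not_not]
  ring

theorem x3c_contrib_covered_more_general (n : ℕ)
    (SS : Fin n → Finset (Fin n))
    (hocc : ∀ i : Fin n, (Finset.univ.filter (fun j : Fin n => i ∈ SS j)).card = 3)
    (T : Finset (Fin n)) (hT : 6 ≤ T.card)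
    (i : Fin n) (hi : 1 < (T.filter (fun j : Fin n => i ∈ SS j)).card) :
    x3cContrib SS T i = 6 := by
  have hcovered_le : (T.filter (i ∈ SS ·)).card ≤ 3 :=
    hocc i ▸ card_le_card (filter_subset_filter _ (subset_univ T))
  have hsplit := card_filter_add_card_filter_not (s := T) (i ∈ SS ·)
  have huncovered : 2 ≤ (T.filter (i ∉ SS ·)).card := by omega
  rw [x3cContrib_eq, fX_of_ne_zero (by omega), fX_of_ne_zero (by omega), gX_of_two_le hi,
    gX_of_two_le huncovered]
  norm_num

/-- If a committee `T` has at least six candidates and element `b_i` is covered by more than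
one member of `T`, then the three voters of `b_i` contribute exactly `6` to its `(f,g)`-NAV
score. -/
theorem x3c_contrib_covered_more (n : ℕ)
    (SS : Fin n → Finset (Fin n))
    (hsize : ∀ j : Fin n, (SS j).card = 3)
    (hocc : ∀ i : Fin n, (Finset.univ.filter (fun j : Fin n => i ∈ SS j)).card = 3)
    (T : Finset (Fin n)) (hT : 6 ≤ T.card)
    (i : Fin n) (hi : 1 < (T.filter (fun j : Fin n => i ∈ SS j)).card) :
    x3cContrib SS T i = 6 :=
  x3c_contrib_covered_more_general n SS hocc T hT i hi
end
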